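/- arXiv:2009.04328 — 2 statements merged into one kernel-verified Lean document; each statement's English description precedes it below -/
import Mathlib

section
/- For every α ∈ (0,2), the class 𝒮₁(α) is contained in 𝒮₂(α), and the inclusion is strict; in particular, the one-sided measure ν(dx) = x^{-1-α} 𝟙_{(0,1)}(x) dx belongs to 𝒮₂(α) but not to 𝒮₁(α). -/
open MeasureTheory Filter

/-- A Lévy measure on `ℝ`: no mass at `0` and `∫ (x² ∧ 1) ν(dx) < ∞`. -/
def IsLevyMeasure (ν : Measure ℝ) : Prop :=
  ν {0} = 0 ∧ ∫⁻ x, ENNReal.ofReal (min (x ^ 2) 1) ∂ν < ⊤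

/-- `∫ (1 - cos(ux)) ν(dx)` as an `ℝ≥0∞`-valued integral. -/
noncomputable def cosInt (ν : Measure ℝ) (u : ℝ) : ENNReal :=
  ∫⁻ x, ENNReal.ofReal (1 - Real.cos (u * x)) ∂ν

/-- The filter `|u| → ∞`. -/
def absAtTop : Filter ℝ := Filter.comap (fun u : ℝ => |u|) Filter.atTop

/-- The class `𝒮₂(α)`: `0 < liminf_{|u|→∞} |u|^{-α} ∫(1-cos(ux))ν(dx) ≤ limsup < ∞`. -/
noncomputable def MemS2 (α : ℝ) (ν : Measure ℝ) : Prop :=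
  0 < Filter.liminf (fun u : ℝ => cosInt ν u / ENNReal.ofReal (|u| ^ α)) absAtTop ∧
  Filter.limsup (fun u : ℝ => cosInt ν u / ENNReal.ofReal (|u| ^ α)) absAtTop < ⊤

/-- The class `𝒮₁(α)`: `ν = ν₁ + ν₂` with `ν₁` having a density `k(x)/|x|^{α+1}` where `k`
is bounded away from `0` and `∞` near the origin and `k(x)/|x|^α` is monotone on each
half-line, while `ν₂` satisfies `limsup_{|u|→∞} |u|^{-α} ∫(1-cos(ux))ν₂(dx) < ∞`. -/
noncomputable def MemS1 (α : ℝ) (ν : Measure ℝ) : Prop :=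
  ∃ (ν₁ ν₂ : Measure ℝ) (k : ℝ → ℝ),
    IsLevyMeasure ν₁ ∧ IsLevyMeasure ν₂ ∧ ν = ν₁ + ν₂ ∧
    ν₁ = volume.withDensity
      (fun x => if x = 0 then 0 else ENNReal.ofReal (k x / |x| ^ (α + 1))) ∧
    (∃ c C : ℝ, 0 < c ∧ ∀ᶠ x in nhdsWithin 0 {(0 : ℝ)}ᶜ, c ≤ k x ∧ k x ≤ C) ∧
    (∀ x y : ℝ, x ≤ y → y < 0 → k x / |x| ^ α ≤ k y / |y| ^ α) ∧
    (∀ x y : ℝ, 0 < x → x ≤ y → k y / |y| ^ α ≤ k x / |x| ^ α) ∧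
    (∃ C : ℝ, ∀ᶠ u in absAtTop, cosInt ν₂ u ≤ ENNReal.ofReal (C * |u| ^ α))


/-!
Near the origin a measure in `𝒮₁(α)` is squeezed between multiples of the model measures
`stableLevyOn α s` with density `|x|^{-1-α}` on `s`. The substitution `x ↦ x / |u|` gives
`cosInt (stableLevyOn α s) u = |u|^α · cosInt (stableLevyOn α s') 1` with `s'` the dilate of `s`.
For `s = ℝ` the right-hand factor is finite because `|x|^{-1-α} dx` is a Lévy measure when
`0 < α < 2`; for `s = (0, δ)` it only grows with the dilation, which gives the lower bound. The
mass of `ν₁` away from the origin is finite and contributes `O(1)`, and `ν₂` contributes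
`O(|u|^α)` by assumption. Finally, the density of a measure in `𝒮₁(α)` is bounded below on both
sides of the origin, so it charges `(-∞, 0)`, which the one-sided example does not.
-/

open Set Real Topology
open scoped ENNReal

lemma measurable_one_sub_cos_mul (u : ℝ) :
    Measurable fun x : ℝ => ENNReal.ofReal (1 - cos (u * x)) := by fun_prop

lemma cosInt_neg (μ : Measure ℝ) (u : ℝ) : cosInt μ (-u) = cosInt μ u := by
  simp only [cosInt, neg_mul, cos_neg]

lemma cosInt_abs (μ : Measure ℝ) (u : ℝ) : cosInt μ |u| = cosInt μ u := by
  rcases abs_choice u with h | h <;> rw [h]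
  exact cosInt_neg μ u

lemma cosInt_mono {μ ν : Measure ℝ} (h : μ ≤ ν) (u : ℝ) : cosInt μ u ≤ cosInt ν u :=
  lintegral_mono' h le_rfl

lemma cosInt_add (μ ν : Measure ℝ) (u : ℝ) : cosInt (μ + ν) u = cosInt μ u + cosInt ν u :=
  lintegral_add_measure _ _ _

lemma cosInt_smul (c : ℝ≥0∞) (μ : Measure ℝ) (u : ℝ) : cosInt (c • μ) u = c * cosInt μ u :=
  lintegral_smul_measure _ _

lemma cosInt_le_two_mul_measure_univ (μ : Measure ℝ) (u : ℝ) : cosInt μ u ≤ 2 * μ univ := by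
  rw [← lintegral_const]
  refine lintegral_mono fun x => ?_
  rw [← ENNReal.ofReal_ofNat]
  exact ENNReal.ofReal_le_ofReal (by linarith [neg_one_le_cos (u * x)])

lemma cosInt_one_pos {μ : Measure ℝ} {r : ℝ} (hr : r ≤ 2 * π) (h : 0 < μ (Ioo 0 r)) :
    0 < cosInt μ 1 := by
  rw [cosInt, lintegral_pos_iff_support (measurable_one_sub_cos_mul 1)]
  refine h.trans_le (measure_mono fun x hx => ?_)
  have hcos : cos x ≠ 1 := by
    rw [Ne, cos_eq_one_iff_of_lt_of_lt (by linarith [hx.1, pi_pos]) (by linarith [hx.2])]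
    exact hx.1.ne'
  simpa [Function.mem_support, one_mul] using lt_of_le_of_ne (cos_le_one x) hcos

lemma one_sub_cos_le_two_mul_min_sq_one (x : ℝ) : 1 - cos x ≤ 2 * min (x ^ 2) 1 := by
  rcases le_total (x ^ 2) 1 with h | h
  · rw [min_eq_left h]
    nlinarith [one_sub_sq_div_two_le_cos (x := x), sq_nonneg x]
  · rw [min_eq_right h]
    linarith [neg_one_le_cos x]

lemma IsLevyMeasure.cosInt_one_lt_top {ν : Measure ℝ} (hν : IsLevyMeasure ν) :
    cosInt ν 1 < ⊤ := by
  refine lt_of_le_of_lt ?_ (ENNReal.mul_lt_top (ENNReal.ofNat_lt_top (n := 2)) hν.2)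
  rw [← lintegral_const_mul _ (by fun_prop)]
  refine lintegral_mono fun x => ?_
  rw [one_mul, ← ENNReal.ofReal_ofNat, ← ENNReal.ofReal_mul zero_le_two]
  exact ENNReal.ofReal_le_ofReal (one_sub_cos_le_two_mul_min_sq_one x)

lemma IsLevyMeasure.measure_compl_Ioo_lt_top {ν : Measure ℝ} (hν : IsLevyMeasure ν) {δ : ℝ}
    (hδ : 0 < δ) : ν (Ioo (-δ) δ)ᶜ < ⊤ := by
  set ε := ENNReal.ofReal (min (δ ^ 2) 1)
  have hε : ε ≠ 0 := by positivity
  have hsub : (Ioo (-δ) δ)ᶜ ⊆ {x | ε ≤ ENNReal.ofReal (min (x ^ 2) 1)} := fun x hx => by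
    have : δ ≤ |x| := not_lt.mp fun h => hx (abs_lt.mp h)
    exact ENNReal.ofReal_le_ofReal (min_le_min_right _ (by nlinarith [sq_abs x]))
  exact (measure_mono hsub).trans_lt <| (meas_ge_le_lintegral_div (by fun_prop) hε
    ENNReal.ofReal_ne_top).trans_lt (ENNReal.div_lt_top hν.2.ne hε)

noncomputable def stableLevyOn (α : ℝ) (s : Set ℝ) : Measure ℝ :=
  volume.withDensity (s.indicator fun x => ENNReal.ofReal (|x| ^ (-1 - α)))

lemma measurable_indicator_ofReal_abs_rpow {s : Set ℝ} (hs : MeasurableSet s) (α : ℝ) :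
    Measurable (s.indicator fun x : ℝ => ENNReal.ofReal (|x| ^ (-1 - α))) :=
  (by fun_prop : Measurable fun x : ℝ => ENNReal.ofReal (|x| ^ (-1 - α))).indicator hs

lemma stableLevyOn_mono (α : ℝ) {s t : Set ℝ} (h : s ⊆ t) :
    stableLevyOn α s ≤ stableLevyOn α t :=
  withDensity_mono (ae_of_all _ (indicator_le_indicator_of_subset h fun _ => zero_le))

lemma stableLevyOn_apply_of_disjoint (α : ℝ) {s t : Set ℝ} (ht : MeasurableSet t)
    (h : Disjoint s t) : stableLevyOn α s t = 0 := by
  rw [stableLevyOn, withDensity_apply _ ht,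
    setLIntegral_congr_fun ht fun x hx => indicator_of_notMem (h.notMem_of_mem_right hx) _,
    lintegral_zero]

lemma stableLevyOn_Ioo_pos (α : ℝ) {s : Set ℝ} (hs : MeasurableSet s) {a b : ℝ} (hab : a < b)
    (h : Ioo a b ⊆ s) : 0 < stableLevyOn α s (Ioo a b) := by
  rw [stableLevyOn, withDensity_apply _ measurableSet_Ioo,
    setLIntegral_pos_iff (measurable_indicator_ofReal_abs_rpow hs α)]
  have hsub : Ioo a b \ {0} ⊆ Function.support
      (s.indicator fun x => ENNReal.ofReal (|x| ^ (-1 - α))) ∩ Ioo a b := fun x hx => by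
    refine ⟨?_, hx.1⟩
    rw [Function.mem_support, indicator_of_mem (h hx.1)]
    exact (ENNReal.ofReal_pos.mpr (rpow_pos_of_pos (abs_pos.mpr hx.2) _)).ne'
  refine lt_of_lt_of_le ?_ (measure_mono hsub)
  rw [measure_sdiff_null (Real.volume_singleton), Real.volume_Ioo]
  exact ENNReal.ofReal_pos.mpr (sub_pos.mpr hab)

lemma lintegral_comp_mul_left_real {F : ℝ → ℝ≥0∞} (hF : Measurable F) {t : ℝ} (ht : t ≠ 0) :
    ∫⁻ x, F (t * x) = ENNReal.ofReal |t⁻¹| * ∫⁻ y, F y := by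
  rw [← lintegral_map hF (measurable_const_mul t), Real.map_volume_mul_left ht,
    lintegral_smul_measure, smul_eq_mul]

lemma abs_inv_mul_abs_inv_mul_rpow {t : ℝ} (ht : t ≠ 0) (α y : ℝ) :
    |t⁻¹| * |t⁻¹ * y| ^ (-1 - α) = |t| ^ α * |y| ^ (-1 - α) := by
  have ht' : 0 < |t| := abs_pos.mpr ht
  rw [abs_mul, mul_rpow (abs_nonneg _) (abs_nonneg _), abs_inv, inv_rpow ht'.le, ← mul_assoc,
    ← rpow_neg_one, ← rpow_neg ht'.le, ← rpow_add ht']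
  ring_nf

lemma cosInt_stableLevyOn (α : ℝ) {s : Set ℝ} (hs : MeasurableSet s) {t : ℝ} (ht : t ≠ 0) :
    cosInt (stableLevyOn α s) t =
      ENNReal.ofReal (|t| ^ α) * cosInt (stableLevyOn α ((t⁻¹ * ·) ⁻¹' s)) 1 := by
  set g : ℝ → ℝ≥0∞ := fun x => ENNReal.ofReal (|x| ^ (-1 - α))
  have hs' : MeasurableSet ((t⁻¹ * ·) ⁻¹' s) := measurable_const_mul _ hs
  simp only [cosInt, stableLevyOn, one_mul]
  rw [lintegral_withDensity_eq_lintegral_mul _ (measurable_indicator_ofReal_abs_rpow hs α)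
      (measurable_one_sub_cos_mul t),
    lintegral_withDensity_eq_lintegral_mul _ (measurable_indicator_ofReal_abs_rpow hs' α)
      (by simpa only [one_mul] using measurable_one_sub_cos_mul 1),
    ← lintegral_const_mul _ (by fun_prop)]
  have hF : Measurable fun y => s.indicator g (t⁻¹ * y) * ENNReal.ofReal (1 - cos y) :=
    ((measurable_indicator_ofReal_abs_rpow hs α).comp (measurable_const_mul _)).mul (by fun_prop)
  calc ∫⁻ x, s.indicator g x * ENNReal.ofReal (1 - cos (t * x))
      = ∫⁻ x, s.indicator g (t⁻¹ * (t * x)) * ENNReal.ofReal (1 - cos (t * x)) := by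
        simp only [inv_mul_cancel_left₀ ht]
    _ = ∫⁻ y, ENNReal.ofReal |t⁻¹| * (s.indicator g (t⁻¹ * y) * ENNReal.ofReal (1 - cos y)) := by
        rw [lintegral_comp_mul_left_real hF ht, lintegral_const_mul _ hF]
    _ = _ := by
        refine lintegral_congr fun y => ?_
        by_cases hy : t⁻¹ * y ∈ s
        · rw [indicator_of_mem hy, Pi.mul_apply,
            indicator_of_mem (show y ∈ (t⁻¹ * ·) ⁻¹' s from hy),
            ← mul_assoc, ← mul_assoc, ← ENNReal.ofReal_mul (abs_nonneg _),
            abs_inv_mul_abs_inv_mul_rpow ht, ENNReal.ofReal_mul (by positivity)]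
        · rw [indicator_of_notMem hy, Pi.mul_apply,
            indicator_of_notMem (show y ∉ (t⁻¹ * ·) ⁻¹' s from hy)]
          simp

lemma integrableOn_Ioi_min_sq_one_mul_rpow {α : ℝ} (hα : α ∈ Ioo 0 2) :
    IntegrableOn (fun y : ℝ => min (y ^ 2) 1 * y ^ (-1 - α)) (Ioi 0) := by
  rw [← Ioc_union_Ioi_eq_Ioi zero_le_one]
  refine IntegrableOn.union ?_ ?_
  · refine (intervalIntegral.intervalIntegrable_rpow' (r := 1 - α) (by linarith [hα.2])).1.congr_fun
      (fun y hy => ?_) measurableSet_Ioc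
    rw [min_eq_left (by nlinarith [hy.1, hy.2]), ← rpow_two, ← rpow_add hy.1]
    ring_nf
  · refine (integrableOn_Ioi_rpow_of_lt (a := -1 - α) (by linarith [hα.1]) zero_lt_one).congr_fun
      (fun y hy => ?_) measurableSet_Ioi
    rw [min_eq_right (by nlinarith [mem_Ioi.mp hy]), one_mul]

lemma isLevyMeasure_stableLevyOn_univ {α : ℝ} (hα : α ∈ Ioo 0 2) :
    IsLevyMeasure (stableLevyOn α univ) := by
  have hint : Integrable fun x : ℝ => min (x ^ 2) 1 * |x| ^ (-1 - α) := by
    have := (integrable_fun_norm_addHaar (volume : Measure ℝ)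
      (f := fun y : ℝ => min (y ^ 2) 1 * y ^ (-1 - α))).mpr
      (by simpa using integrableOn_Ioi_min_sq_one_mul_rpow hα)
    simpa [Real.norm_eq_abs, sq_abs] using this
  refine ⟨withDensity_absolutelyContinuous _ _ Real.volume_singleton, ?_⟩
  rw [stableLevyOn, lintegral_withDensity_eq_lintegral_mul _
    (measurable_indicator_ofReal_abs_rpow MeasurableSet.univ α) (by fun_prop)]
  refine lt_of_eq_of_lt (lintegral_congr fun x => ?_) hint.lintegral_lt_top
  rw [Pi.mul_apply, indicator_univ, ← ENNReal.ofReal_mul (by positivity), mul_comm]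

lemma cosInt_stableLevyOn_univ (α : ℝ) {u : ℝ} (hu : u ≠ 0) :
    cosInt (stableLevyOn α univ) u = ENNReal.ofReal (|u| ^ α) * cosInt (stableLevyOn α univ) 1 := by
  simpa using cosInt_stableLevyOn α MeasurableSet.univ hu

lemma le_cosInt_stableLevyOn_Ioo (α δ : ℝ) {u : ℝ} (hu : 1 ≤ |u|) :
    ENNReal.ofReal (|u| ^ α) * cosInt (stableLevyOn α (Ioo 0 δ)) 1 ≤
      cosInt (stableLevyOn α (Ioo 0 δ)) u := by
  have hu0 : 0 < |u| := zero_lt_one.trans_le hu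
  have hsub : Ioo 0 δ ⊆ (|u|⁻¹ * ·) ⁻¹' Ioo 0 δ := fun y hy =>
    ⟨mul_pos (inv_pos.mpr hu0) hy.1, lt_of_le_of_lt (inv_mul_le_of_le_mul₀ (abs_nonneg u) hy.1.le
      (le_mul_of_one_le_left hy.1.le hu)) hy.2⟩
  rw [← cosInt_abs _ u, cosInt_stableLevyOn α measurableSet_Ioo hu0.ne', abs_abs]
  gcongr
  exact cosInt_mono (stableLevyOn_mono α hsub) 1

lemma cosInt_stableLevyOn_Ioo_one_pos (α : ℝ) {δ : ℝ} (hδ : 0 < δ) :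
    0 < cosInt (stableLevyOn α (Ioo 0 δ)) 1 :=
  cosInt_one_pos (min_le_right δ (2 * π)) <| stableLevyOn_Ioo_pos α measurableSet_Ioo
    (lt_min hδ (by positivity)) (Ioo_subset_Ioo_right (min_le_left _ _))

lemma smul_stableLevyOn_le_withDensity {α c δ : ℝ} {k : ℝ → ℝ}
    (hk : ∀ x, x ≠ 0 → |x| < δ → c ≤ k x) :
    ENNReal.ofReal c • stableLevyOn α (Ioo (-δ) δ) ≤
      volume.withDensity (fun x => if x = 0 then 0 else ENNReal.ofReal (k x / |x| ^ (α + 1))) := by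
  rw [stableLevyOn, ← withDensity_smul _ (measurable_indicator_ofReal_abs_rpow measurableSet_Ioo α)]
  refine withDensity_mono ?_
  filter_upwards [compl_mem_ae_iff.mpr (measure_singleton (0 : ℝ))] with x (hx : x ≠ 0)
  by_cases hxδ : x ∈ Ioo (-δ) δ
  · rw [Pi.smul_apply, indicator_of_mem hxδ, if_neg hx, smul_eq_mul,
      ← ENNReal.ofReal_mul' (by positivity), show -1 - α = -(α + 1) by ring,
      rpow_neg (abs_nonneg x), ← div_eq_mul_inv]
    exact ENNReal.ofReal_le_ofReal (div_le_div_of_nonneg_right (hk x hx (abs_lt.mpr hxδ))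
      (by positivity))
  · simp [indicator_of_notMem hxδ]

lemma restrict_withDensity_le_smul_stableLevyOn {α C δ : ℝ} {k : ℝ → ℝ}
    (hk : ∀ x, x ≠ 0 → |x| < δ → k x ≤ C) :
    (volume.withDensity
        (fun x => if x = 0 then 0 else ENNReal.ofReal (k x / |x| ^ (α + 1)))).restrict
        (Ioo (-δ) δ) ≤
      ENNReal.ofReal C • stableLevyOn α univ := by
  rw [stableLevyOn,
    ← withDensity_smul _ (measurable_indicator_ofReal_abs_rpow MeasurableSet.univ α),
    restrict_withDensity measurableSet_Ioo, ← withDensity_indicator measurableSet_Ioo]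
  refine withDensity_mono (ae_of_all _ fun x => ?_)
  by_cases hxδ : x ∈ Ioo (-δ) δ
  · rw [indicator_of_mem hxδ]
    split_ifs with hx
    · exact zero_le
    rw [Pi.smul_apply, indicator_univ, smul_eq_mul,
      ← ENNReal.ofReal_mul' (by positivity), show -1 - α = -(α + 1) by ring,
      rpow_neg (abs_nonneg x), ← div_eq_mul_inv]
    exact ENNReal.ofReal_le_ofReal (div_le_div_of_nonneg_right (hk x hx (abs_lt.mpr hxδ))
      (by positivity))
  · simp [indicator_of_notMem hxδ]

lemma exists_pos_of_eventually_nhdsNE_zero {p : ℝ → Prop} (h : ∀ᶠ x in 𝓝[≠] (0 : ℝ), p x) :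
    ∃ δ > 0, ∀ x, x ≠ 0 → |x| < δ → p x := by
  obtain ⟨δ, hδ, hp⟩ := Metric.eventually_nhds_iff.mp (eventually_nhdsWithin_iff.mp h)
  exact ⟨δ, hδ, fun x hx hxδ => hp (by rwa [Real.dist_0_eq_abs]) hx⟩

lemma eventually_one_le_abs_absAtTop : ∀ᶠ u in absAtTop, (1 : ℝ) ≤ |u| :=
  tendsto_comap.eventually (eventually_ge_atTop 1)

lemma memS2_of_le_of_le {α : ℝ} {ν : Measure ℝ} {c C : ℝ≥0∞} (hc : c ≠ 0) (hC : C ≠ ⊤)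
    (hlow : ∀ᶠ u in absAtTop, c * ENNReal.ofReal (|u| ^ α) ≤ cosInt ν u)
    (hup : ∀ᶠ u in absAtTop, cosInt ν u ≤ C * ENNReal.ofReal (|u| ^ α)) : MemS2 α ν := by
  constructor
  · refine (pos_iff_ne_zero.mpr hc).trans_le (le_liminf_of_le (by isBoundedDefault) ?_)
    filter_upwards [hlow, eventually_one_le_abs_absAtTop] with u hu hu1
    have hpos : ENNReal.ofReal (|u| ^ α) ≠ 0 :=
      (ENNReal.ofReal_pos.mpr (rpow_pos_of_pos (zero_lt_one.trans_le hu1) α)).ne'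
    exact (ENNReal.le_div_iff_mul_le (Or.inl hpos) (Or.inl ENNReal.ofReal_ne_top)).mpr hu
  · refine (limsup_le_of_le (by isBoundedDefault) ?_).trans_lt hC.lt_top
    filter_upwards [hup] with u hu
    exact ENNReal.div_le_of_le_mul hu

theorem memS2_stableLevyOn_Ioo {α δ : ℝ} (hα : α ∈ Ioo 0 2) (hδ : 0 < δ) :
    MemS2 α (stableLevyOn α (Ioo 0 δ)) := by
  refine memS2_of_le_of_le (cosInt_stableLevyOn_Ioo_one_pos α hδ).ne'
    (isLevyMeasure_stableLevyOn_univ hα).cosInt_one_lt_top.ne ?_ ?_ <;>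
    filter_upwards [eventually_one_le_abs_absAtTop] with u hu
  · rw [mul_comm]
    exact le_cosInt_stableLevyOn_Ioo α δ hu
  · rw [mul_comm, ← cosInt_stableLevyOn_univ α (abs_pos.mp (zero_lt_one.trans_le hu))]
    exact cosInt_mono (stableLevyOn_mono α (subset_univ _)) u

lemma exists_cosInt_le_of_restrict_le {α : ℝ} (hα : α ∈ Ioo 0 2) {μ : Measure ℝ}
    (hμ : IsLevyMeasure μ) {C δ : ℝ} (hδ : 0 < δ)
    (h : μ.restrict (Ioo (-δ) δ) ≤ ENNReal.ofReal C • stableLevyOn α univ) :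
    ∃ M ≠ ⊤, ∀ u : ℝ, 1 ≤ |u| → cosInt μ u ≤ M * ENNReal.ofReal (|u| ^ α) := by
  set K := cosInt (stableLevyOn α univ) 1
  set T := μ (Ioo (-δ) δ)ᶜ
  have hK : K ≠ ⊤ := (isLevyMeasure_stableLevyOn_univ hα).cosInt_one_lt_top.ne
  have hT : T ≠ ⊤ := (hμ.measure_compl_Ioo_lt_top hδ).ne
  refine ⟨ENNReal.ofReal C * K + 2 * T, by finiteness, fun u hu => ?_⟩
  have hu1 : 1 ≤ ENNReal.ofReal (|u| ^ α) := ENNReal.one_le_ofReal.mpr (one_le_rpow hu hα.1.le)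
  calc cosInt μ u = cosInt (μ.restrict (Ioo (-δ) δ)) u + cosInt (μ.restrict (Ioo (-δ) δ)ᶜ) u := by
        rw [← cosInt_add, Measure.restrict_add_restrict_compl measurableSet_Ioo]
    _ ≤ ENNReal.ofReal C * (ENNReal.ofReal (|u| ^ α) * K) + 2 * T * ENNReal.ofReal (|u| ^ α) := by
        gcongr
        · rw [← cosInt_stableLevyOn_univ α (abs_pos.mp (zero_lt_one.trans_le hu)), ← cosInt_smul]
          exact cosInt_mono h u
        · calc cosInt (μ.restrict (Ioo (-δ) δ)ᶜ) u ≤ 2 * T := by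
                simpa [T] using cosInt_le_two_mul_measure_univ (μ.restrict (Ioo (-δ) δ)ᶜ) u
            _ ≤ 2 * T * ENNReal.ofReal (|u| ^ α) := le_mul_of_one_le_right' hu1
    _ = (ENNReal.ofReal C * K + 2 * T) * ENNReal.ofReal (|u| ^ α) := by ring

theorem MemS1.memS2 {α : ℝ} (hα : α ∈ Ioo 0 2) {ν : Measure ℝ} (h : MemS1 α ν) :
    MemS2 α ν := by
  obtain ⟨ν₁, ν₂, k, hν₁, -, rfl, hdens, ⟨c, C, hc, hk⟩, -, -, C₂, hν₂⟩ := h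
  obtain ⟨δ, hδ, hkδ⟩ := exists_pos_of_eventually_nhdsNE_zero hk
  have hlow : ENNReal.ofReal c • stableLevyOn α (Ioo 0 δ) ≤ ν₁ := by
    refine le_trans ?_
      (hdens ▸ smul_stableLevyOn_le_withDensity fun x hx hxδ => (hkδ x hx hxδ).1)
    gcongr
    exact stableLevyOn_mono α (Ioo_subset_Ioo_left (by linarith))
  obtain ⟨M, hM, hν₁up⟩ := exists_cosInt_le_of_restrict_le hα hν₁ hδ
    (hdens ▸ restrict_withDensity_le_smul_stableLevyOn fun x hx hxδ => (hkδ x hx hxδ).2)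
  set κ := cosInt (stableLevyOn α (Ioo 0 δ)) 1
  refine memS2_of_le_of_le (c := ENNReal.ofReal c * κ) (C := M + ENNReal.ofReal C₂)
    (mul_ne_zero (by positivity) (cosInt_stableLevyOn_Ioo_one_pos α hδ).ne') (by finiteness) ?_ ?_
  · filter_upwards [eventually_one_le_abs_absAtTop] with u hu
    calc ENNReal.ofReal c * κ * ENNReal.ofReal (|u| ^ α)
        = ENNReal.ofReal c * (ENNReal.ofReal (|u| ^ α) * κ) := by ring
      _ ≤ cosInt (ENNReal.ofReal c • stableLevyOn α (Ioo 0 δ)) u := by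
          rw [cosInt_smul]
          gcongr
          exact le_cosInt_stableLevyOn_Ioo α δ hu
      _ ≤ cosInt (ν₁ + ν₂) u := cosInt_mono (hlow.trans (Measure.le_add_right le_rfl)) u
  · filter_upwards [eventually_one_le_abs_absAtTop, hν₂] with u hu hu₂
    rw [cosInt_add, add_mul]
    exact add_le_add (hν₁up u hu) (by rwa [← ENNReal.ofReal_mul' (by positivity)])

theorem MemS1.measure_Iio_pos {α : ℝ} {ν : Measure ℝ} (h : MemS1 α ν) : 0 < ν (Iio 0) := by
  obtain ⟨ν₁, ν₂, k, -, -, rfl, hdens, ⟨c, C, hc, hk⟩, -⟩ := h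
  obtain ⟨δ, hδ, hkδ⟩ := exists_pos_of_eventually_nhdsNE_zero hk
  have hlow : ENNReal.ofReal c • stableLevyOn α (Ioo (-δ) δ) ≤ ν₁ + ν₂ :=
    (hdens ▸ smul_stableLevyOn_le_withDensity fun x hx hxδ => (hkδ x hx hxδ).1).trans
      (Measure.le_add_right le_rfl)
  calc 0 < ENNReal.ofReal c * stableLevyOn α (Ioo (-δ) δ) (Ioo (-δ) 0) :=
        ENNReal.mul_pos (by positivity) (stableLevyOn_Ioo_pos α measurableSet_Ioo
          (by linarith) (Ioo_subset_Ioo_right hδ.le)).ne'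
    _ ≤ (ν₁ + ν₂) (Ioo (-δ) 0) := hlow _
    _ ≤ (ν₁ + ν₂) (Iio 0) := measure_mono Ioo_subset_Iio_self

lemma stableLevyOn_Ioo_zero (α a : ℝ) :
    stableLevyOn α (Ioo 0 a) =
      volume.withDensity ((Ioo 0 a).indicator fun x => ENNReal.ofReal (x ^ (-1 - α))) := by
  rw [stableLevyOn, indicator_congr fun x hx => by rw [abs_of_pos hx.1]]

/-- `𝒮₁(α) ⊆ 𝒮₂(α)` (among Lévy measures), the inclusion being strict:
the one-sided measure `x^{-1-α} 𝟙_{(0,1)}(x) dx` is in `𝒮₂(α)` but not in `𝒮₁(α)`. -/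
theorem stmt4 (α : ℝ) (hα : α ∈ Set.Ioo (0 : ℝ) 2) :
    (∀ ν : Measure ℝ, IsLevyMeasure ν → MemS1 α ν → MemS2 α ν) ∧
    MemS2 α (volume.withDensity
      ((Set.Ioo (0 : ℝ) 1).indicator fun x => ENNReal.ofReal (x ^ (-1 - α)))) ∧
    ¬ MemS1 α (volume.withDensity
      ((Set.Ioo (0 : ℝ) 1).indicator fun x => ENNReal.ofReal (x ^ (-1 - α)))) := by
  rw [← stableLevyOn_Ioo_zero]
  refine ⟨fun ν _ h => h.memS2 hα, memS2_stableLevyOn_Ioo hα one_pos, fun h => ?_⟩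
  exact h.measure_Iio_pos.ne' <| stableLevyOn_apply_of_disjoint α measurableSet_Iio
    (Ioi_disjoint_Iio_same.mono_left Ioo_subset_Ioi_self)
end

section
/- Let ν be a Lévy measure, c ∈ ℝ, and suppose c(e^x - 1) < 1 for all x ∈ supp ν and ∫_{|x|>1} e^x ν(dx) < ∞. Define ν*(dx) = (1 - c(e^x-1)) ν(dx). If ν ∈ 𝒮₂(α) for some α ∈ (0,2), then ν* ∈ 𝒮₂(α); that is, 0 < liminf_{|u|→∞} |u|^{-α} ∫(1-cos(ux)) ν*(dx) ≤ limsup_{|u|→∞} |u|^{-α} ∫(1-cos(ux)) ν*(dx) < ∞. -/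
open MeasureTheory Filter

/-- Support of a measure on `ℝ`. -/
def msupport (ν : Measure ℝ) : Set ℝ :=
  {x | ∀ ε > 0, 0 < ν (Set.Ioo (x - ε) (x + ε))}

open Topology
open scoped ENNReal

/-!
The density `1 - c(eˣ - 1)` tends to `1` at the origin, so on a small interval `|x| < δ` it lies
between `1/2` and `3/2`. There `ν*` and `ν` are comparable, so `∫(1 - cos(ux)) ν*(dx)` and
`∫(1 - cos(ux)) ν(dx)` are comparable up to an additive constant coming from `|x| ≥ δ`: that
region has finite `ν`- and `ν*`-mass (the latter by `∫_{|x|>1} eˣ ν(dx) < ∞`) and `1 - cos ≤ 2`.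
Since `|u|^α → ∞`, the additive constant disappears from both the liminf and the limsup.
-/

instance absAtTop_neBot : NeBot absAtTop :=
  atTop_neBot.mono tendsto_abs_atTop_atTop.le_comap

lemma tendsto_ofReal_abs_rpow_absAtTop {α : ℝ} (hα : 0 < α) :
    Tendsto (fun u : ℝ => ENNReal.ofReal (|u| ^ α)) absAtTop (𝓝 ∞) :=
  ENNReal.tendsto_ofReal_atTop.comp
    ((tendsto_rpow_atTop hα).comp (tendsto_comap (f := fun u : ℝ => |u|)))

section RatioLimits

variable {ι : Type*} {l : Filter ι} {f g w : ι → ℝ≥0∞} {a K : ℝ≥0∞}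

lemma limsup_div_le_const_mul_of_le_mul_add (ha : a ≠ ∞) (hK : K ≠ ∞) (hw : Tendsto w l (𝓝 ∞))
    (h : ∀ i, f i ≤ a * g i + K) :
    limsup (fun i => f i / w i) l ≤ a * limsup (fun i => g i / w i) l := by
  have hKw : Tendsto (fun i => K / w i) l (𝓝 0) := by
    simpa using ENNReal.Tendsto.const_div hw (Or.inr hK)
  calc limsup (fun i => f i / w i) l
      ≤ limsup ((fun i => a * (g i / w i)) + fun i => K / w i) l :=
        limsup_le_limsup (.of_forall fun i => by
          simpa only [Pi.add_apply, ENNReal.add_div, mul_div_assoc] using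
            ENNReal.div_le_div_right (h i) (w i))
    _ = a * limsup (fun i => g i / w i) l := by
        rw [ENNReal.limsup_add_of_right_tendsto_zero hKw, ENNReal.limsup_const_mul_of_ne_top ha]

lemma const_mul_liminf_div_le_of_mul_le_add [l.NeBot] (ha : a ≠ ∞) (hK : K ≠ ∞)
    (hw : Tendsto w l (𝓝 ∞)) (h : ∀ i, a * g i ≤ f i + K) :
    a * liminf (fun i => g i / w i) l ≤ liminf (fun i => f i / w i) l := by
  have hKw : Tendsto (fun i => K / w i) l (𝓝 0) := by
    simpa using ENNReal.Tendsto.const_div hw (Or.inr hK)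
  calc a * liminf (fun i => g i / w i) l = liminf (fun i => a * (g i / w i)) l :=
        (ENNReal.liminf_const_mul_of_ne_top ha).symm
    _ ≤ liminf ((fun i => f i / w i) + fun i => K / w i) l :=
        liminf_le_liminf (.of_forall fun i => by
          simpa only [Pi.add_apply, ENNReal.add_div, mul_div_assoc] using
            ENNReal.div_le_div_right (h i) (w i))
    _ = liminf (fun i => f i / w i) l := ENNReal.liminf_add_of_right_tendsto_zero hKw _

end RatioLimits

lemma IsLevyMeasure.measure_le_abs_lt_top {ν : Measure ℝ} (hν : IsLevyMeasure ν) {δ : ℝ}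
    (hδ : 0 < δ) : ν {x | δ ≤ |x|} < ∞ := by
  set m := ENNReal.ofReal (min (δ ^ 2) 1)
  have hm : m ≠ 0 := (ENNReal.ofReal_pos.2 (lt_min (by positivity) one_pos)).ne'
  have hsub : {x : ℝ | δ ≤ |x|} ⊆ {x | m ≤ ENNReal.ofReal (min (x ^ 2) 1)} := fun x hx => by
    have : δ ^ 2 ≤ x ^ 2 := by simpa only [sq_abs] using pow_le_pow_left₀ hδ.le hx 2
    exact ENNReal.ofReal_le_ofReal (min_le_min this le_rfl)
  have hmeas : Measurable fun x : ℝ => ENNReal.ofReal (min (x ^ 2) 1) := by fun_prop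
  calc ν {x | δ ≤ |x|} ≤ (∫⁻ x, ENNReal.ofReal (min (x ^ 2) 1) ∂ν) / m :=
        (measure_mono hsub).trans
          (meas_ge_le_lintegral_div hmeas.aemeasurable hm ENNReal.ofReal_ne_top)
    _ < ∞ := ENNReal.div_lt_top hν.2.ne hm

lemma setLIntegral_ofReal_exp_lt_top {ν : Measure ℝ} {S : Set ℝ} (hS : ν S ≠ ∞)
    (hbig : ∫⁻ x in {x : ℝ | 1 < |x|}, ENNReal.ofReal (Real.exp x) ∂ν < ∞) :
    ∫⁻ x in S, ENNReal.ofReal (Real.exp x) ∂ν < ∞ := by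
  have hsub : S ⊆ (S ∩ {x | |x| ≤ 1}) ∪ {x | 1 < |x|} := fun x hx => by
    by_cases h : |x| ≤ 1
    · exact Or.inl ⟨hx, h⟩
    · exact Or.inr (not_le.1 h)
  have hsmall : ∫⁻ x in S ∩ {x | |x| ≤ 1}, ENNReal.ofReal (Real.exp x) ∂ν
      ≤ ENNReal.ofReal (Real.exp 1) * ν S :=
    calc ∫⁻ x in S ∩ {x | |x| ≤ 1}, ENNReal.ofReal (Real.exp x) ∂ν
        ≤ ∫⁻ _ in S ∩ {x | |x| ≤ 1}, ENNReal.ofReal (Real.exp 1) ∂ν :=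
          setLIntegral_mono measurable_const fun x hx =>
            ENNReal.ofReal_le_ofReal (Real.exp_le_exp.2 ((le_abs_self x).trans hx.2))
      _ ≤ ENNReal.ofReal (Real.exp 1) * ν S := by
          rw [setLIntegral_const]
          gcongr
          exact Set.inter_subset_left
  calc ∫⁻ x in S, ENNReal.ofReal (Real.exp x) ∂ν
      ≤ ∫⁻ x in (S ∩ {x | |x| ≤ 1}) ∪ {x | 1 < |x|}, ENNReal.ofReal (Real.exp x) ∂ν :=
        lintegral_mono_set hsub
    _ ≤ ∫⁻ x in S ∩ {x | |x| ≤ 1}, ENNReal.ofReal (Real.exp x) ∂ν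
          + ∫⁻ x in {x | 1 < |x|}, ENNReal.ofReal (Real.exp x) ∂ν :=
        lintegral_union_le _ _ _
    _ < ∞ := ENNReal.add_lt_top.2
        ⟨hsmall.trans_lt (ENNReal.mul_lt_top ENNReal.ofReal_lt_top hS.lt_top), hbig⟩

section CosInt

variable {ν : Measure ℝ} {g : ℝ → ℝ≥0∞} {S : Set ℝ} {b : ℝ≥0∞}

lemma measurable_ofReal_one_sub_cos_mul (u : ℝ) :
    Measurable fun x : ℝ => ENNReal.ofReal (1 - Real.cos (u * x)) := by
  fun_prop

lemma ofReal_one_sub_cos_le_two (t : ℝ) : ENNReal.ofReal (1 - Real.cos t) ≤ 2 := by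
  simpa using ENNReal.ofReal_le_ofReal (by linarith [Real.neg_one_le_cos t] : 1 - Real.cos t ≤ 2)

lemma cosInt_withDensity (hg : Measurable g) (u : ℝ) :
    cosInt (ν.withDensity g) u = ∫⁻ x, g x * ENNReal.ofReal (1 - Real.cos (u * x)) ∂ν :=
  lintegral_withDensity_eq_lintegral_mul ν hg (measurable_ofReal_one_sub_cos_mul u)

lemma cosInt_withDensity_le_mul_add (hg : Measurable g) (hS : MeasurableSet S)
    (hgb : ∀ x ∈ Sᶜ, g x ≤ b) (u : ℝ) :
    cosInt (ν.withDensity g) u ≤ b * cosInt ν u + 2 * ∫⁻ x in S, g x ∂ν := by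
  calc cosInt (ν.withDensity g) u = ∫⁻ x, g x * ENNReal.ofReal (1 - Real.cos (u * x)) ∂ν :=
        cosInt_withDensity hg u
    _ ≤ ∫⁻ x, b * ENNReal.ofReal (1 - Real.cos (u * x)) + S.indicator (fun x => 2 * g x) x ∂ν := by
        refine lintegral_mono fun x => ?_
        by_cases hx : x ∈ S
        · rw [Set.indicator_of_mem hx, mul_comm 2]
          exact le_add_left (by gcongr; exact ofReal_one_sub_cos_le_two _)
        · rw [Set.indicator_of_notMem hx, add_zero]
          gcongr
          exact hgb x hx
    _ = b * cosInt ν u + 2 * ∫⁻ x in S, g x ∂ν := by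
        rw [lintegral_add_left ((measurable_ofReal_one_sub_cos_mul u).const_mul b),
          lintegral_const_mul _ (measurable_ofReal_one_sub_cos_mul u), lintegral_indicator hS,
          lintegral_const_mul _ hg, cosInt]

lemma mul_cosInt_le_cosInt_withDensity_add (hg : Measurable g) (hS : MeasurableSet S)
    (hgb : ∀ x ∈ Sᶜ, b ≤ g x) (u : ℝ) :
    b * cosInt ν u ≤ cosInt (ν.withDensity g) u + b * (2 * ν S) := by
  calc b * cosInt ν u = ∫⁻ x, b * ENNReal.ofReal (1 - Real.cos (u * x)) ∂ν :=
        (lintegral_const_mul _ (measurable_ofReal_one_sub_cos_mul u)).symm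
    _ ≤ ∫⁻ x, g x * ENNReal.ofReal (1 - Real.cos (u * x)) + S.indicator (fun _ => b * 2) x ∂ν := by
        refine lintegral_mono fun x => ?_
        by_cases hx : x ∈ S
        · rw [Set.indicator_of_mem hx]
          exact le_add_left (by gcongr; exact ofReal_one_sub_cos_le_two _)
        · rw [Set.indicator_of_notMem hx, add_zero]
          gcongr
          exact hgb x hx
    _ = cosInt (ν.withDensity g) u + b * (2 * ν S) := by
        have hm : Measurable fun x => g x * ENNReal.ofReal (1 - Real.cos (u * x)) := by fun_prop
        rw [lintegral_add_left hm,
          lintegral_indicator_const hS, cosInt_withDensity hg, mul_assoc]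

end CosInt

lemma exists_pos_abs_mul_exp_sub_one_lt (c : ℝ) {ε : ℝ} (hε : 0 < ε) :
    ∃ δ > 0, ∀ x : ℝ, |x| < δ → |c * (Real.exp x - 1)| < ε := by
  have hcont : Continuous fun x : ℝ => c * (Real.exp x - 1) := by fun_prop
  obtain ⟨δ, hδ, h⟩ := Metric.continuous_iff.1 hcont 0 ε hε
  exact ⟨δ, hδ, fun x hx => by simpa [Real.dist_eq] using h x (by simpa [Real.dist_eq] using hx)⟩

lemma setLIntegral_ofReal_one_sub_mul_exp_sub_one_lt_top {ν : Measure ℝ} {S : Set ℝ} (c : ℝ)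
    (hS : ν S ≠ ∞) (hbig : ∫⁻ x in {x : ℝ | 1 < |x|}, ENNReal.ofReal (Real.exp x) ∂ν < ∞) :
    ∫⁻ x in S, ENNReal.ofReal (1 - c * (Real.exp x - 1)) ∂ν < ∞ := by
  have hbound : ∀ x : ℝ, ENNReal.ofReal (1 - c * (Real.exp x - 1))
      ≤ ENNReal.ofReal (1 + |c|) * (1 + ENNReal.ofReal (Real.exp x)) := fun x => by
    have habs : -(c * (Real.exp x - 1)) ≤ |c| * (Real.exp x + 1) := by
      calc -(c * (Real.exp x - 1)) ≤ |c| * |Real.exp x - 1| := (neg_le_abs _).trans (abs_mul _ _).le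
        _ ≤ |c| * (Real.exp x + 1) := by
          gcongr
          exact abs_le.2 ⟨by linarith [Real.exp_pos x], by linarith⟩
    rw [← ENNReal.ofReal_one, ← ENNReal.ofReal_add zero_le_one (Real.exp_pos x).le,
      ← ENNReal.ofReal_mul (by positivity)]
    exact ENNReal.ofReal_le_ofReal (by nlinarith [abs_nonneg c, Real.exp_pos x])
  calc ∫⁻ x in S, ENNReal.ofReal (1 - c * (Real.exp x - 1)) ∂ν
      ≤ ∫⁻ x in S, ENNReal.ofReal (1 + |c|) * (1 + ENNReal.ofReal (Real.exp x)) ∂ν :=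
        lintegral_mono fun x => hbound x
    _ = ENNReal.ofReal (1 + |c|) * (ν S + ∫⁻ x in S, ENNReal.ofReal (Real.exp x) ∂ν) := by
        rw [lintegral_const_mul' _ _ ENNReal.ofReal_ne_top, lintegral_add_left measurable_const,
          setLIntegral_const, one_mul]
    _ < ∞ := ENNReal.mul_lt_top ENNReal.ofReal_lt_top
        (ENNReal.add_lt_top.2 ⟨hS.lt_top, setLIntegral_ofReal_exp_lt_top hS hbig⟩)

theorem stmt8_general (ν : Measure ℝ) (hν : IsLevyMeasure ν) (c α : ℝ) (hα : α ∈ Set.Ioo (0 : ℝ) 2)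
    (hbig : ∫⁻ x in {x : ℝ | 1 < |x|}, ENNReal.ofReal (Real.exp x) ∂ν < ⊤)
    (hS2 : MemS2 α ν) :
    MemS2 α (ν.withDensity fun x => ENNReal.ofReal (1 - c * (Real.exp x - 1))) := by
  set g : ℝ → ℝ≥0∞ := fun x => ENNReal.ofReal (1 - c * (Real.exp x - 1))
  have hg : Measurable g := by fun_prop
  obtain ⟨δ, hδ, hsmall⟩ := exists_pos_abs_mul_exp_sub_one_lt c (by norm_num : (0 : ℝ) < 1 / 2)
  set S := {x : ℝ | δ ≤ |x|}
  have hS : MeasurableSet S := measurableSet_le measurable_const measurable_abs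
  have hνS : ν S ≠ ∞ := (hν.measure_le_abs_lt_top hδ).ne
  have hnear : ∀ x ∈ Sᶜ, |c * (Real.exp x - 1)| < 1 / 2 := fun x hx =>
    hsmall x (not_le.1 hx)
  have hw := tendsto_ofReal_abs_rpow_absAtTop hα.1
  constructor
  · have hlow := mul_cosInt_le_cosInt_withDensity_add (ν := ν) hg hS (b := ENNReal.ofReal (1 / 2))
      (fun x hx => ENNReal.ofReal_le_ofReal (by linarith [(abs_lt.1 (hnear x hx)).2]))
    refine lt_of_lt_of_le ?_ (const_mul_liminf_div_le_of_mul_le_add ENNReal.ofReal_ne_top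
      (ENNReal.mul_ne_top ENNReal.ofReal_ne_top (ENNReal.mul_ne_top (by norm_num) hνS)) hw hlow)
    exact ENNReal.mul_pos (by norm_num) hS2.1.ne'
  · have hup := cosInt_withDensity_le_mul_add (ν := ν) hg hS (b := ENNReal.ofReal (3 / 2))
      (fun x hx => ENNReal.ofReal_le_ofReal (by linarith [(abs_lt.1 (hnear x hx)).1]))
    refine lt_of_le_of_lt (limsup_div_le_const_mul_of_le_mul_add ENNReal.ofReal_ne_top
      (ENNReal.mul_ne_top (by norm_num)
        (setLIntegral_ofReal_one_sub_mul_exp_sub_one_lt_top c hνS hbig).ne) hw hup) ?_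
    exact ENNReal.mul_lt_top ENNReal.ofReal_lt_top hS2.2

/-- if `ν ∈ 𝒮₂(α)`, `c(e^x-1) < 1` on `supp ν` and `∫_{|x|>1} e^x ν(dx) < ∞`,
then `ν*(dx) = (1-c(e^x-1))ν(dx)` belongs to `𝒮₂(α)`. -/
theorem stmt8 (ν : Measure ℝ) (hν : IsLevyMeasure ν) (c α : ℝ) (hα : α ∈ Set.Ioo (0 : ℝ) 2)
    (hc : ∀ x ∈ msupport ν, c * (Real.exp x - 1) < 1)
    (hbig : ∫⁻ x in {x : ℝ | 1 < |x|}, ENNReal.ofReal (Real.exp x) ∂ν < ⊤)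
    (hS2 : MemS2 α ν) :
    MemS2 α (ν.withDensity fun x => ENNReal.ofReal (1 - c * (Real.exp x - 1))) :=
  stmt8_general ν hν c α hα hbig hS2
end
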